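/- arXiv:2312.07282 — 6 statements merged into one kernel-verified Lean document; each statement's English description precedes it below -/
import Mathlib

section
/- Let M ≥ 1 and let p = (p_1,...,p_M) and q = (q_1,...,q_M) be probability vectors with all q_m > 0. Then the Kullback-Leibler-type sum ∑_{m=1}^M p_m * log(p_m / q_m) is at most ∑_{m=1}^M (p_m - q_m)^2 / q_m, where terms with p_m = 0 are interpreted as 0. -/
theorem kl_le_chi_square (M : ℕ) (hM : 1 ≤ M) (p q : Fin M → ℝ)
    (hp0 : ∀ m, 0 ≤ p m) (hq0 : ∀ m, 0 < q m)
    (hp1 : ∑ m, p m = 1) (hq1 : ∑ m, q m = 1) :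
    ∑ m, p m * Real.log (p m / q m) ≤ ∑ m, (p m - q m) ^ 2 / q m := by
  have step1 : ∑ m, p m * Real.log (p m / q m) ≤ ∑ m, p m * (p m / q m - 1) := by
    apply Finset.sum_le_sum
    intro m _
    rcases eq_or_lt_of_le (hp0 m) with h | h
    · simp [← h]
    · have hpos : 0 < p m / q m := div_pos h (hq0 m)
      exact mul_le_mul_of_nonneg_left (Real.log_le_sub_one_of_pos hpos) (hp0 m)
  have step2 : ∑ m, p m * (p m / q m - 1) = ∑ m, (p m - q m) ^ 2 / q m := by
    have h : ∑ m, ((p m - q m) ^ 2 / q m - p m * (p m / q m - 1)) = ∑ m, (q m - p m) := by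
      apply Finset.sum_congr rfl
      intro m _
      have hq := (hq0 m).ne'
      field_simp
      ring
    rw [Finset.sum_sub_distrib, Finset.sum_sub_distrib, hp1, hq1, sub_self] at h
    linarith
  linarith
end

section
/- Let M ≥ 1, let a_1,...,a_M > 0 with a_max := max_m a_m, and let c = (c_1,...,c_M), z = (z_1,...,z_M) be probability vectors with all entries in (0,1). Then ∑_{m=1}^M (a_m c_m / a_max) * log( (c_m / ∑_{j} a_j c_j) / (z_m / ∑_j a_j z_j) ) ≤ ∑_{m=1}^M c_m * log(c_m / z_m). -/
/-!
Put `w m = a m / amax ∈ (0, 1]`, `p = ∑ w c` and `q = ∑ w z`. Since the tilted ratio is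
`(c m / z m) / (p / q)`, the left side equals `∑ w c log (c / z) - p log (p / q)`. The difference to
the right side is `∑ (1 - w) c log (c / z) + p log (p / q)`, and bounding each `x log (x / y)` below
by `x - y` makes it at least `∑ (1 - w) (c - z) + (p - q) = 0`: this is Gibbs' inequality for the
`(M + 1)`-point distributions `((1 - w m) c m)ₘ, p` and `((1 - w m) z m)ₘ, q`.
-/

open Finset Real

lemma Real.sub_le_mul_log_div {x y : ℝ} (hx : 0 ≤ x) (hy : 0 < y) :
    x - y ≤ x * log (x / y) := by
  rcases hx.eq_or_lt with rfl | hx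
  · simpa using hy.le
  have hlog := one_sub_inv_le_log_of_pos (div_pos hx hy)
  rw [inv_div] at hlog
  calc x - y = x * (1 - y / x) := by field_simp
    _ ≤ x * log (x / y) := mul_le_mul_of_nonneg_left hlog hx.le

section Tilt

variable {ι : Type*} [Fintype ι] {w c z : ι → ℝ}

lemma sum_mul_pos_of_sum_eq_one (hw : ∀ i, 0 < w i) (hz : ∀ i, 0 < z i) (hz1 : ∑ i, z i = 1) :
    0 < ∑ i, w i * z i := by
  obtain ⟨i, -, -⟩ := exists_ne_zero_of_sum_ne_zero (hz1 ▸ one_ne_zero)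
  exact sum_pos (fun j _ => mul_pos (hw j) (hz j)) ⟨i, mem_univ i⟩

theorem sum_mul_mul_log_div_sub_le (hw0 : ∀ i, 0 < w i) (hw1 : ∀ i, w i ≤ 1)
    (hc : ∀ i, 0 < c i) (hz : ∀ i, 0 < z i) (hc1 : ∑ i, c i = 1) (hz1 : ∑ i, z i = 1) :
    ∑ i, w i * c i * log (c i / z i) -
        (∑ i, w i * c i) * log ((∑ i, w i * c i) / ∑ i, w i * z i)
      ≤ ∑ i, c i * log (c i / z i) := by
  set p := ∑ i, w i * c i
  set q := ∑ i, w i * z i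
  have hp : 0 ≤ p := (sum_mul_pos_of_sum_eq_one hw0 hc hc1).le
  have hq : 0 < q := sum_mul_pos_of_sum_eq_one hw0 hz hz1
  have hsplit : ∑ i, (1 - w i) * (c i - z i) = q - p := by
    simp only [mul_sub, sub_mul, one_mul, sum_sub_distrib, hc1, hz1, p, q]
    ring
  have hgibbs : ∑ i, (1 - w i) * (c i - z i) ≤ ∑ i, (1 - w i) * (c i * log (c i / z i)) :=
    sum_le_sum fun i _ => mul_le_mul_of_nonneg_left
      (sub_le_mul_log_div (hc i).le (hz i)) (sub_nonneg.2 (hw1 i))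
  calc ∑ i, w i * c i * log (c i / z i) - p * log (p / q)
      ≤ ∑ i, w i * c i * log (c i / z i) + (q - p) := by
        linarith [sub_le_mul_log_div hp hq]
    _ ≤ ∑ i, w i * c i * log (c i / z i) + ∑ i, (1 - w i) * (c i * log (c i / z i)) := by
        linarith
    _ = ∑ i, c i * log (c i / z i) := by
        rw [← sum_add_distrib]
        exact sum_congr rfl fun i _ => by ring

end Tilt

theorem tilted_kl_le_kl_general (M : ℕ) (a c z : Fin M → ℝ) (amax : ℝ)
    (ha : ∀ m, 0 < a m)
    (hamax_ub : ∀ m, a m ≤ amax)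
    (hc : ∀ m, c m ∈ Set.Ioo (0:ℝ) 1) (hz : ∀ m, z m ∈ Set.Ioo (0:ℝ) 1)
    (hc1 : ∑ m, c m = 1) (hz1 : ∑ m, z m = 1) :
    ∑ m, (a m * c m / amax) *
        Real.log ((c m / ∑ j, a j * c j) / (z m / ∑ j, a j * z j))
      ≤ ∑ m, c m * Real.log (c m / z m) := by
  obtain ⟨m₀, -, -⟩ := exists_ne_zero_of_sum_ne_zero (hc1 ▸ one_ne_zero)
  have hamax : 0 < amax := (ha m₀).trans_le (hamax_ub m₀)
  set w : Fin M → ℝ := fun m => a m / amax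
  have hw0 : ∀ m, 0 < w m := fun m => div_pos (ha m) hamax
  have hscale : ∀ x : Fin M → ℝ, ∑ j, a j * x j = amax * ∑ j, w j * x j := fun x => by
    rw [mul_sum]
    exact sum_congr rfl fun j _ => by simp only [w]; field_simp
  rw [hscale c, hscale z]
  set p := ∑ j, w j * c j
  set q := ∑ j, w j * z j
  have hp : 0 < p := sum_mul_pos_of_sum_eq_one hw0 (fun m => (hc m).1) hc1
  have hq : 0 < q := sum_mul_pos_of_sum_eq_one hw0 (fun m => (hz m).1) hz1
  have hterm : ∀ m, a m * c m / amax * log (c m / (amax * p) / (z m / (amax * q))) =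
      w m * c m * log (c m / z m) - w m * c m * log (p / q) := fun m => by
    have hcz : c m / z m ≠ 0 := (div_pos (hc m).1 (hz m).1).ne'
    rw [show c m / (amax * p) / (z m / (amax * q)) = c m / z m / (p / q) by field_simp,
      log_div hcz (div_pos hp hq).ne']
    simp only [w]
    ring
  rw [sum_congr rfl fun m _ => hterm m, sum_sub_distrib, ← sum_mul]
  exact sum_mul_mul_log_div_sub_le hw0 (fun m => (div_le_one hamax).2 (hamax_ub m))
    (fun m => (hc m).1) (fun m => (hz m).1) hc1 hz1

theorem tilted_kl_le_kl (M : ℕ) (hM : 1 ≤ M) (a c z : Fin M → ℝ) (amax : ℝ)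
    (ha : ∀ m, 0 < a m)
    (hamax_ub : ∀ m, a m ≤ amax) (hamax_mem : ∃ m, a m = amax)
    (hc : ∀ m, c m ∈ Set.Ioo (0:ℝ) 1) (hz : ∀ m, z m ∈ Set.Ioo (0:ℝ) 1)
    (hc1 : ∑ m, c m = 1) (hz1 : ∑ m, z m = 1) :
    ∑ m, (a m * c m / amax) *
        Real.log ((c m / ∑ j, a j * c j) / (z m / ∑ j, a j * z j))
      ≤ ∑ m, c m * Real.log (c m / z m) :=
  tilted_kl_le_kl_general M a c z amax ha hamax_ub hc hz hc1 hz1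
end

section
/- Let M ≥ 2, t ∈ (0, 1/(2M)), and let p, q be probability vectors with ∑_{ℓ:p_ℓ ≥ t}(p_ℓ - t) > 1/2 and ∑_{ℓ:q_ℓ ≥ t}(q_ℓ - t) > 1/2, and suppose |p_m - q_m| ≤ ε for all m. Then for the truncations p^t and q^t defined by the proportional truncation rule, |p^t_m - q^t_m| ≤ (4M + 1) * ε for all m ∈ {1,...,M}. -/
/-!
Writing `r = A / B` for the ratio of the mass `A` missing below `t` to the mass `B` available
above `t`, the truncation is `t + (p m - t)₊ (1 - r)`. Since `A ≤ M t < 1/2 < B`, the ratio lies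
in `[0, 1]`, so the difference of two truncations is at most `|p m - q m|` plus
`(q m - t)₊ |r_q - r_p|`. The factor `(q m - t)₊` is at most the denominator `D` of `r_q`, and
`D (r_q - r_p) = (C - A) + r_p (B - D)` with `A, B` and `C, D` the masses of `p` and `q`, each of
which is `M ε`-Lipschitz in the sup norm.
-/

/-- The truncation of a vector `p` at level `t`: entries below `t` are raised to `t`,
entries at least `t` are lowered proportionally so the total mass is preserved. -/
noncomputable def trunc {M : ℕ} (t : ℝ) (p : Fin M → ℝ) : Fin M → ℝ :=
  fun m =>
    if p m < t then t
    else p m - (p m - t) *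
        (∑ j ∈ Finset.univ.filter (fun j => p j < t), (t - p j)) /
        (∑ l ∈ Finset.univ.filter (fun l => t ≤ p l), (p l - t))

open Finset

theorem sum_filter_eq_sum_max_zero {ι : Type*} [Fintype ι] (P : ι → Prop) [DecidablePred P]
    (f : ι → ℝ) (hP : ∀ i, P i → 0 ≤ f i) (hnP : ∀ i, ¬P i → f i ≤ 0) :
    ∑ i ∈ univ.filter P, f i = ∑ i, max (f i) 0 := by
  rw [sum_filter]
  refine sum_congr rfl fun i _ => ?_
  split_ifs with h
  · exact (max_eq_left (hP i h)).symm
  · exact (max_eq_right (hnP i h)).symm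

theorem abs_sum_max_zero_sub_sum_max_zero_le {ι : Type*} [Fintype ι] {f g : ι → ℝ} {ε : ℝ}
    (h : ∀ i, |f i - g i| ≤ ε) :
    |∑ i, max (f i) 0 - ∑ i, max (g i) 0| ≤ Fintype.card ι * ε := by
  rw [← sum_sub_distrib]
  calc |∑ i, (max (f i) 0 - max (g i) 0)| ≤ ∑ i, |max (f i) 0 - max (g i) 0| :=
        abs_sum_le_sum_abs _ _
    _ ≤ ∑ _i : ι, ε := sum_le_sum fun i _ => (abs_max_sub_max_le_abs _ _ _).trans (h i)
    _ = Fintype.card ι * ε := by simp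

section Masses

variable {ι : Type*} [Fintype ι]

noncomputable def truncDeficit (t : ℝ) (p : ι → ℝ) : ℝ := ∑ j, max (t - p j) 0

noncomputable def truncExcess (t : ℝ) (p : ι → ℝ) : ℝ := ∑ l, max (p l - t) 0

theorem sum_filter_lt_eq_truncDeficit (t : ℝ) (p : ι → ℝ) :
    ∑ j ∈ univ.filter (fun j => p j < t), (t - p j) = truncDeficit t p :=
  sum_filter_eq_sum_max_zero _ _ (fun _ h => by linarith) fun _ h => by linarith [not_lt.mp h]

theorem sum_filter_le_eq_truncExcess (t : ℝ) (p : ι → ℝ) :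
    ∑ l ∈ univ.filter (fun l => t ≤ p l), (p l - t) = truncExcess t p :=
  sum_filter_eq_sum_max_zero _ _ (fun _ h => by linarith) fun _ h => by linarith [not_le.mp h]

theorem truncDeficit_nonneg (t : ℝ) (p : ι → ℝ) : 0 ≤ truncDeficit t p :=
  sum_nonneg fun _ _ => le_max_right _ _

theorem truncDeficit_le_card_mul {t : ℝ} {p : ι → ℝ} (ht : 0 ≤ t) (hp : ∀ j, 0 ≤ p j) :
    truncDeficit t p ≤ Fintype.card ι * t :=
  calc truncDeficit t p ≤ ∑ _j : ι, t :=
        sum_le_sum fun j _ => max_le (by linarith [hp j]) ht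
    _ = Fintype.card ι * t := by simp

theorem max_sub_zero_le_truncExcess (t : ℝ) (p : ι → ℝ) (l : ι) :
    max (p l - t) 0 ≤ truncExcess t p :=
  single_le_sum (f := fun l => max (p l - t) 0) (fun _ _ => le_max_right _ _) (mem_univ l)

theorem abs_truncDeficit_sub_le {t ε : ℝ} {p q : ι → ℝ} (h : ∀ i, |p i - q i| ≤ ε) :
    |truncDeficit t p - truncDeficit t q| ≤ Fintype.card ι * ε :=
  abs_sum_max_zero_sub_sum_max_zero_le fun i => by
    rw [sub_sub_sub_cancel_left, abs_sub_comm]; exact h i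

theorem abs_truncExcess_sub_le {t ε : ℝ} {p q : ι → ℝ} (h : ∀ i, |p i - q i| ≤ ε) :
    |truncExcess t p - truncExcess t q| ≤ Fintype.card ι * ε :=
  abs_sum_max_zero_sub_sum_max_zero_le fun i => by
    rw [sub_sub_sub_cancel_right]; exact h i

end Masses

theorem trunc_eq {M : ℕ} (t : ℝ) (p : Fin M → ℝ) (m : Fin M) :
    trunc t p m = t + max (p m - t) 0 * (1 - truncDeficit t p / truncExcess t p) := by
  rw [trunc, sum_filter_lt_eq_truncDeficit, sum_filter_le_eq_truncExcess]
  split_ifs with h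
  · rw [max_eq_right (by linarith)]; ring
  · rw [max_eq_left (by linarith [not_lt.mp h])]; ring

theorem abs_mul_one_sub_sub_mul_one_sub_le {x y r s : ℝ} (hy : 0 ≤ y) (hr0 : 0 ≤ r)
    (hr1 : r ≤ 1) : |x * (1 - r) - y * (1 - s)| ≤ |x - y| + y * |s - r| :=
  calc |x * (1 - r) - y * (1 - s)| = |(x - y) * (1 - r) + y * (s - r)| := by ring_nf
    _ ≤ |x - y| * |1 - r| + y * |s - r| := by
        rw [← abs_mul, ← abs_of_nonneg hy, ← abs_mul, abs_of_nonneg hy]; exact abs_add_le _ _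
    _ ≤ |x - y| + y * |s - r| := by
        rw [abs_of_nonneg (sub_nonneg.mpr hr1)]
        nlinarith [abs_nonneg (x - y)]

theorem mul_abs_div_sub_div_le {A B C D : ℝ} (hA : 0 ≤ A) (hAB : A ≤ B) (hD : 0 ≤ D) :
    D * |C / D - A / B| ≤ |C - A| + |B - D| := by
  rcases hD.eq_or_lt with rfl | hD
  · simp only [zero_mul]; positivity
  have hr0 : 0 ≤ A / B := div_nonneg hA (hA.trans hAB)
  have hr1 : A / B ≤ 1 := div_le_one_of_le₀ hAB (hA.trans hAB)
  have hrB : A / B * B = A := div_mul_cancel_of_imp fun hB => le_antisymm (hB ▸ hAB) hA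
  calc D * |C / D - A / B| = |(C - A) + A / B * (B - D)| := by
        rw [← abs_of_pos hD, ← abs_mul, abs_of_pos hD, mul_sub, mul_div_cancel₀ C hD.ne']
        congr 1
        linear_combination -hrB
    _ ≤ |C - A| + A / B * |B - D| := by
        rw [← abs_of_nonneg hr0, ← abs_mul, abs_of_nonneg hr0]; exact abs_add_le _ _
    _ ≤ |C - A| + |B - D| := by nlinarith [abs_nonneg (B - D)]

theorem truncDeficit_le_truncExcess {M : ℕ} {t : ℝ} {p : Fin M → ℝ} (ht : 0 < t)
    (htM : t < 1 / (2 * M)) (hp0 : ∀ m, 0 ≤ p m) (hpsum : 1 / 2 < truncExcess t p) :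
    truncDeficit t p ≤ truncExcess t p := by
  have hMt : M * t < 1 / 2 := by
    rw [lt_div_iff₀ (one_div_pos.mp (ht.trans htM))] at htM
    linarith
  have hA := truncDeficit_le_card_mul ht.le hp0
  rw [Fintype.card_fin] at hA
  linarith

theorem trunc_lipschitz_general (M : ℕ) (t ε : ℝ)
    (ht : 0 < t) (htM : t < 1 / (2 * M))
    (p q : Fin M → ℝ) (hp0 : ∀ m, 0 ≤ p m)
    (hpsum : 1 / 2 < ∑ l ∈ Finset.univ.filter (fun l => t ≤ p l), (p l - t))
    (hpq : ∀ m, |p m - q m| ≤ ε) :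
    ∀ m, |trunc t p m - trunc t q m| ≤ (4 * M + 1) * ε := by
  intro m
  rw [sum_filter_le_eq_truncExcess] at hpsum
  have hAB := truncDeficit_le_truncExcess ht htM hp0 hpsum
  have hA0 := truncDeficit_nonneg t p
  have hx : |max (p m - t) 0 - max (q m - t) 0| ≤ ε :=
    (abs_max_sub_max_le_abs _ _ _).trans (by rw [sub_sub_sub_cancel_right]; exact hpq m)
  have hy : max (q m - t) 0 ≤ truncExcess t q := max_sub_zero_le_truncExcess t q m
  have hAC := abs_truncDeficit_sub_le (t := t) hpq
  have hBD := abs_truncExcess_sub_le (t := t) hpq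
  rw [Fintype.card_fin] at hAC hBD
  rw [trunc_eq, trunc_eq, add_sub_add_left_eq_sub]
  calc _ ≤ |max (p m - t) 0 - max (q m - t) 0| + max (q m - t) 0 *
          |truncDeficit t q / truncExcess t q - truncDeficit t p / truncExcess t p| :=
        abs_mul_one_sub_sub_mul_one_sub_le (le_max_right _ _)
          (div_nonneg hA0 (hA0.trans hAB)) (div_le_one_of_le₀ hAB (hA0.trans hAB))
    _ ≤ ε + truncExcess t q *
          |truncDeficit t q / truncExcess t q - truncDeficit t p / truncExcess t p| := by
        gcongr
    _ ≤ ε + (|truncDeficit t q - truncDeficit t p| + |truncExcess t p - truncExcess t q|) := by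
        gcongr
        exact mul_abs_div_sub_div_le hA0 hAB ((le_max_right _ _).trans hy)
    _ ≤ (4 * M + 1) * ε := by
        rw [abs_sub_comm] at hAC
        have hε : 0 ≤ ε := hx.trans' (abs_nonneg _)
        nlinarith

theorem trunc_lipschitz (M : ℕ) (hM : 2 ≤ M) (t ε : ℝ)
    (ht : 0 < t) (htM : t < 1 / (2 * M))
    (p q : Fin M → ℝ) (hp0 : ∀ m, 0 ≤ p m) (hq0 : ∀ m, 0 ≤ q m)
    (hp1 : ∑ m, p m = 1) (hq1 : ∑ m, q m = 1)
    (hpsum : 1 / 2 < ∑ l ∈ Finset.univ.filter (fun l => t ≤ p l), (p l - t))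
    (hqsum : 1 / 2 < ∑ l ∈ Finset.univ.filter (fun l => t ≤ q l), (q l - t))
    (hpq : ∀ m, |p m - q m| ≤ ε) :
    ∀ m, |trunc t p m - trunc t q m| ≤ (4 * M + 1) * ε :=
  trunc_lipschitz_general M t ε ht htM p q hp0 hpsum hpq
end

section
/- Let a, z, z' be probability vectors in (0,1)^M and define f(z) := -∑_{m=1}^M a_m log z_m. Then |f(z) - f(z')| ≤ ∑_{m=1}^M ( |a_m - z_m| * |z'_m - z_m| / z_m + a_m * (z'_m - z_m)^2 / (z_m * min(z_m, z'_m)) ). -/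
lemma log_taylor_bound (x y : ℝ) (hx : 0 < x) (hy : 0 < y) :
    |Real.log y - Real.log x - (y - x) / x| ≤ (y - x) ^ 2 / (x * y) := by
  have h1 : Real.log y - Real.log x ≤ (y - x) / x := by
    have h := Real.log_le_sub_one_of_pos (div_pos hy hx)
    rw [Real.log_div hy.ne' hx.ne'] at h
    have : y / x - 1 = (y - x) / x := by field_simp
    linarith [this ▸ h]
  have h2 : (y - x) / y ≤ Real.log y - Real.log x := by
    have h := Real.log_le_sub_one_of_pos (div_pos hx hy)
    rw [Real.log_div hx.ne' hy.ne'] at h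
    have : x / y - 1 = (x - y) / y := by field_simp
    have := this ▸ h
    have e : (y - x) / y = -((x - y) / y) := by ring
    linarith [e]
  rw [abs_le]
  constructor
  · have e : (y - x) / y - (y - x) / x = -((y - x) ^ 2 / (x * y)) := by
      field_simp; ring
    linarith [e ▸ sub_le_sub_right h2 ((y - x) / x)]
  · have : (0:ℝ) ≤ (y - x) ^ 2 / (x * y) := by positivity
    linarith

theorem cross_entropy_diff_bound (M : ℕ) (a z z' : Fin M → ℝ)
    (ha : ∀ m, a m ∈ Set.Ioo (0:ℝ) 1) (hz : ∀ m, z m ∈ Set.Ioo (0:ℝ) 1)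
    (hz' : ∀ m, z' m ∈ Set.Ioo (0:ℝ) 1)
    (ha1 : ∑ m, a m = 1) (hz1 : ∑ m, z m = 1) (hz'1 : ∑ m, z' m = 1) :
    |(-∑ m, a m * Real.log (z m)) - (-∑ m, a m * Real.log (z' m))| ≤
      ∑ m, (|a m - z m| * |z' m - z m| / z m +
        a m * (z' m - z m) ^ 2 / (z m * min (z m) (z' m))) := by
  set D : Fin M → ℝ := fun m => Real.log (z' m) - Real.log (z m) - (z' m - z m) / z m with hD
  have hzpos : ∀ m, 0 < z m := fun m => (hz m).1
  have hz'pos : ∀ m, 0 < z' m := fun m => (hz' m).1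
  have hapos : ∀ m, 0 < a m := fun m => (ha m).1
  have hsum0 : ∑ m, (z' m - z m) = 0 := by
    rw [Finset.sum_sub_distrib, hz'1, hz1]; ring
  have e1 : (-∑ m, a m * Real.log (z m)) - (-∑ m, a m * Real.log (z' m))
      = ∑ m, ((a m - z m) * (z' m - z m) / z m + a m * D m) := by
    have key : ∀ m, (a m - z m) * (z' m - z m) / z m + a m * D m
        = (a m * Real.log (z' m) - a m * Real.log (z m)) - (z' m - z m) := by
      intro m
      have hzm := (hzpos m).ne'
      simp only [hD]
      field_simp
      ring
    rw [Finset.sum_congr rfl (fun m _ => key m), Finset.sum_sub_distrib,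
      Finset.sum_sub_distrib, hsum0]
    ring
  rw [e1]
  calc |∑ m, ((a m - z m) * (z' m - z m) / z m + a m * D m)|
      ≤ ∑ m, |(a m - z m) * (z' m - z m) / z m + a m * D m| :=
        Finset.abs_sum_le_sum_abs _ _
    _ ≤ ∑ m, (|a m - z m| * |z' m - z m| / z m +
        a m * (z' m - z m) ^ 2 / (z m * min (z m) (z' m))) := by
        apply Finset.sum_le_sum
        intro m _
        have h1 : |(a m - z m) * (z' m - z m) / z m| = |a m - z m| * |z' m - z m| / z m := by
          rw [abs_div, abs_mul, abs_of_pos (hzpos m)]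
        have hmin : 0 < min (z m) (z' m) := lt_min (hzpos m) (hz'pos m)
        have hDb : |D m| ≤ (z' m - z m) ^ 2 / (z m * min (z m) (z' m)) := by
          calc |D m| ≤ (z' m - z m) ^ 2 / (z m * z' m) :=
              log_taylor_bound (z m) (z' m) (hzpos m) (hz'pos m)
            _ ≤ (z' m - z m) ^ 2 / (z m * min (z m) (z' m)) := by
              gcongr
              all_goals first
                | exact min_le_right _ _
                | positivity
                | exact (hzpos m).le
                | exact mul_pos (hzpos m) hmin
        have h2 : |a m * D m| ≤ a m * (z' m - z m) ^ 2 / (z m * min (z m) (z' m)) := by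
          rw [abs_mul, abs_of_pos (hapos m), mul_div_assoc]
          exact mul_le_mul_of_nonneg_left hDb (hapos m).le
        calc |(a m - z m) * (z' m - z m) / z m + a m * D m|
            ≤ |(a m - z m) * (z' m - z m) / z m| + |a m * D m| := abs_add_le _ _
          _ ≤ _ := by rw [h1]; gcongr
end

section
/- Under the label shift assumption with finite X, p(y) > 0 for all y, q(x) > 0 for all x, and the class probability matching identity: for every y ∈ {1,...,M}, p(y) = ∑_{x} q(x) * p(y|x) / (∑_{m=1}^M w*(m) p(m|x)), where w*(y) := q(y)/p(y). -/
theorem class_probability_matching_identity (X : Type*) [Fintype X] (M : ℕ) (hM : 1 ≤ M)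
    (pY qY : Fin M → ℝ) (k : Fin M → X → ℝ)
    (hpY : ∀ y, 0 < pY y) (hqY0 : ∀ y, 0 ≤ qY y)
    (hpY1 : ∑ y, pY y = 1) (hqY1 : ∑ y, qY y = 1)
    (hk0 : ∀ y x, 0 ≤ k y x) (hk1 : ∀ y, ∑ x, k y x = 1)
    (hpX : ∀ x, 0 < ∑ y, pY y * k y x)
    (hqX : ∀ x, 0 < ∑ y, qY y * k y x) :
    ∀ y, pY y = ∑ x, (∑ m, qY m * k m x) *
        ((pY y * k y x / (∑ m, pY m * k m x)) /
          (∑ m, (qY m / pY m) * (pY m * k m x / (∑ m', pY m' * k m' x)))) := by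
  intro y
  have key : ∀ x, (∑ m, qY m * k m x) *
        ((pY y * k y x / (∑ m, pY m * k m x)) /
          (∑ m, (qY m / pY m) * (pY m * k m x / (∑ m', pY m' * k m' x))))
        = pY y * k y x := by
    intro x
    have hdenom : (∑ m, (qY m / pY m) * (pY m * k m x / (∑ m', pY m' * k m' x)))
        = (∑ m, qY m * k m x) / (∑ m', pY m' * k m' x) := by
      rw [Finset.sum_div]
      apply Finset.sum_congr rfl
      intro m _
      have hm := (hpY m).ne'
      calc qY m / pY m * (pY m * k m x / (∑ m', pY m' * k m' x))
          = qY m * k m x / (∑ m', pY m' * k m' x) * (pY m / pY m) := by ring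
        _ = qY m * k m x / (∑ m', pY m' * k m' x) := by rw [div_self hm, mul_one]
    rw [hdenom]
    have h1 := (hpX x).ne'
    have h2 := (hqX x).ne'
    field_simp
    try ring
  rw [Finset.sum_congr rfl (fun x _ => key x), ← Finset.mul_sum, hk1, mul_one]
end

section
/- Suppose X is a finite set, M ≥ 2, and the label shift assumption holds with q(x|y) = p(x|y), p(y) > 0 for all y, and the class-conditional distributions {q(·|y) : y = 1,...,M} are linearly independent as functions on X. Let w = (w(1),...,w(M)) be a vector of nonnegative reals such that ∑_m w(m) p(m|x) > 0 for all x with q(x) > 0, and suppose that for all y, p(y) = ∑_x q(x) p(y|x) / (∑_m w(m) p(m|x)). Then w(y) = q(y)/p(y) for every y. -/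
/-!
Write `q` for the target marginal and `s = ∑ w(m) p(m) p(·|m)` for the marginal that the weights
`w` produce. The matching equations say exactly that the likelihood ratio `q / s - 1` is
orthogonal to every class-conditional `p(·|y)`, hence to `s - q`, which lies in their span. But
`(q / s - 1) (s - q) = -(s - q)² / s ≤ 0` pointwise, so the orthogonality forces `s = q`, and
linear independence of the class-conditionals identifies the coefficients: `w(y) p(y) = q(y)`.
-/

open Finset

noncomputable section

variable {ι X : Type*} [Fintype ι]

def mix (c : ι → ℝ) (k : ι → X → ℝ) (x : X) : ℝ :=
  ∑ m, c m * k m x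

def posterior (π : ι → ℝ) (k : ι → X → ℝ) (y : ι) (x : X) : ℝ :=
  π y * k y x / mix π k x

theorem mix_sub (c d : ι → ℝ) (k : ι → X → ℝ) (x : X) :
    mix (fun m => c m - d m) k x = mix c k x - mix d k x := by
  simp only [mix, sub_mul, sum_sub_distrib]

theorem mix_nonneg {c : ι → ℝ} {k : ι → X → ℝ} (hc : ∀ m, 0 ≤ c m) (hk : ∀ m x, 0 ≤ k m x)
    (x : X) : 0 ≤ mix c k x :=
  sum_nonneg fun m _ => mul_nonneg (hc m) (hk m x)

theorem sum_mul_posterior {π : ι → ℝ} {k : ι → X → ℝ} (w : ι → ℝ) (x : X) :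
    ∑ m, w m * posterior π k m x = mix (fun m => w m * π m) k x / mix π k x := by
  simp only [posterior, mix, sum_div, mul_div_assoc, mul_assoc]

theorem posterior_div_sum_mul_posterior {π : ι → ℝ} {k : ι → X → ℝ} {x : X}
    (hx : mix π k x ≠ 0) (w : ι → ℝ) (y : ι) :
    posterior π k y x / ∑ m, w m * posterior π k m x =
      π y * k y x / mix (fun m => w m * π m) k x := by
  rw [sum_mul_posterior, posterior, div_div_div_cancel_right₀ hx]

theorem sum_div_mix_mul_eq_one [Fintype X] {q : X → ℝ} {p w : ι → ℝ} {k : ι → X → ℝ} {y : ι}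
    (hy : p y ≠ 0) (hp : ∀ x, mix p k x ≠ 0)
    (hmatch : p y = ∑ x, q x * (posterior p k y x / ∑ m, w m * posterior p k m x)) :
    ∑ x, q x / mix (fun m => w m * p m) k x * k y x = 1 := by
  refine mul_left_cancel₀ hy ?_
  rw [mul_one, mul_sum]
  conv_rhs => rw [hmatch]
  refine sum_congr rfl fun x _ => ?_
  rw [posterior_div_sum_mul_posterior (hp x)]
  ring

theorem sum_mul_mix_eq_zero [Fintype X] {g : X → ℝ} {k : ι → X → ℝ}
    (hg : ∀ y, ∑ x, g x * k y x = 0) (c : ι → ℝ) : ∑ x, g x * mix c k x = 0 := by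
  simp only [mix, mul_sum]
  rw [sum_comm]
  refine sum_eq_zero fun y _ => ?_
  simp only [mul_left_comm (g _), ← mul_sum, hg y, mul_zero]

theorem div_sub_one_mul_sub_eq_neg {q s : ℝ} (hqs : s = 0 → q = 0) :
    (q / s - 1) * (s - q) = -((s - q) ^ 2 / s) := by
  rcases eq_or_ne s 0 with hs | hs
  · simp [hs, hqs hs]
  · field_simp
    ring

theorem eq_of_sum_div_sub_one_mul_sub_eq_zero [Fintype X] {q s : X → ℝ} (hs : ∀ x, 0 ≤ s x)
    (hqs : ∀ x, s x = 0 → q x = 0) (h : ∑ x, (q x / s x - 1) * (s x - q x) = 0) : s = q := by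
  simp only [div_sub_one_mul_sub_eq_neg (hqs _)] at h
  have hterm := (sum_eq_zero_iff_of_nonpos fun x _ =>
    neg_nonpos.mpr (div_nonneg (sq_nonneg (s x - q x)) (hs x))).mp h
  funext x
  rcases div_eq_zero_iff.mp (neg_eq_zero.mp (hterm x (mem_univ x))) with hsq | hsx
  · exact sub_eq_zero.mp (pow_eq_zero_iff two_ne_zero |>.mp hsq)
  · rw [hsx, hqs x hsx]

end

theorem cpm_identifiability_general (X : Type*) [Fintype X] (M : ℕ)
    (pY qY : Fin M → ℝ) (k : Fin M → X → ℝ)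
    (hpY : ∀ y, 0 < pY y) (hqY0 : ∀ y, 0 ≤ qY y)
    (hk0 : ∀ y x, 0 ≤ k y x) (hk1 : ∀ y, ∑ x, k y x = 1)
    (hpX : ∀ x, 0 < ∑ m, pY m * k m x)
    (hindep : ∀ α : Fin M → ℝ, (∀ x, ∑ y, α y * k y x = 0) → ∀ y, α y = 0)
    (w : Fin M → ℝ) (hw0 : ∀ m, 0 ≤ w m)
    (hwpos : ∀ x, 0 < ∑ m, qY m * k m x →
      0 < ∑ m, w m * (pY m * k m x / (∑ m', pY m' * k m' x)))
    (hmatch : ∀ y, pY y = ∑ x, (∑ m, qY m * k m x) *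
        ((pY y * k y x / (∑ m, pY m * k m x)) /
          (∑ m, w m * (pY m * k m x / (∑ m', pY m' * k m' x))))) :
    ∀ y, w y = qY y / pY y := by
  set q := mix qY k
  set s := mix (fun m => w m * pY m) k
  have hs0 : ∀ x, 0 ≤ s x := mix_nonneg (fun m => mul_nonneg (hw0 m) (hpY m).le) hk0
  have hweight : ∀ x, ∑ m, w m * (pY m * k m x / ∑ m', pY m' * k m' x) = s x / mix pY k x :=
    sum_mul_posterior w
  have hqs : ∀ x, s x = 0 → q x = 0 := fun x hsx =>
    le_antisymm (not_lt.mp fun hqx => by simpa [hweight, hsx] using hwpos x hqx)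
      (mix_nonneg hqY0 hk0 x)
  have horth : ∀ y, ∑ x, (q x / s x - 1) * k y x = 0 := fun y => by
    simp only [sub_one_mul, sum_sub_distrib, hk1, sub_eq_zero]
    exact sum_div_mix_mul_eq_one (hpY y).ne' (fun x => (hpX x).ne') (hmatch y)
  have hsq : s = q := eq_of_sum_div_sub_one_mul_sub_eq_zero hs0 hqs <| by
    simpa only [mix_sub] using sum_mul_mix_eq_zero horth fun m => w m * pY m - qY m
  intro y
  rw [eq_div_iff (hpY y).ne', ← sub_eq_zero]
  exact hindep (fun m => w m * pY m - qY m)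
    (fun x => (mix_sub _ _ k x).trans (sub_eq_zero.mpr (congrFun hsq x))) y

theorem cpm_identifiability (X : Type*) [Fintype X] (M : ℕ) (hM : 2 ≤ M)
    (pY qY : Fin M → ℝ) (k : Fin M → X → ℝ)
    (hpY : ∀ y, 0 < pY y) (hqY0 : ∀ y, 0 ≤ qY y)
    (hpY1 : ∑ y, pY y = 1) (hqY1 : ∑ y, qY y = 1)
    (hk0 : ∀ y x, 0 ≤ k y x) (hk1 : ∀ y, ∑ x, k y x = 1)
    (hpX : ∀ x, 0 < ∑ m, pY m * k m x)
    (hindep : ∀ α : Fin M → ℝ, (∀ x, ∑ y, α y * k y x = 0) → ∀ y, α y = 0)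
    (w : Fin M → ℝ) (hw0 : ∀ m, 0 ≤ w m)
    (hwpos : ∀ x, 0 < ∑ m, qY m * k m x →
      0 < ∑ m, w m * (pY m * k m x / (∑ m', pY m' * k m' x)))
    (hmatch : ∀ y, pY y = ∑ x, (∑ m, qY m * k m x) *
        ((pY y * k y x / (∑ m, pY m * k m x)) /
          (∑ m, w m * (pY m * k m x / (∑ m', pY m' * k m' x))))) :
    ∀ y, w y = qY y / pY y :=
  cpm_identifiability_general X M pY qY k hpY hqY0 hk0 hk1 hpX hindep w hw0 hwpos hmatch
end
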